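/- arXiv:2301.08723 — 3 statements merged into one kernel-verified Lean document; each statement's English description precedes it below -/
import Mathlib

section
/- For all real numbers M ≥ 0, s ≥ 0, t ≥ 0, it holds that st/(M + log(e + st)) ≤ e^{t-M} + s. -/
/-!
Write `D = M + log (e + st) ≥ 1`. If `t ≤ D`, then `st / D ≤ s`. Otherwise
`log (e + st) < t - M`, so `st < e + st < e^{t-M}`, and `st / D ≤ st` because `D ≥ 1`.
-/

open Real

lemma one_le_log_exp_one_add {x : ℝ} (hx : 0 ≤ x) : 1 ≤ log (exp 1 + x) :=
  (le_log_iff_exp_le (by positivity)).2 (le_add_of_nonneg_right hx)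

lemma mul_div_le_left_of_le {s t D : ℝ} (hs : 0 ≤ s) (hD : 0 ≤ D) (htD : t ≤ D) :
    s * t / D ≤ s :=
  div_le_of_le_mul₀ hD hs (mul_le_mul_of_nonneg_left htD hs)

lemma lt_exp_of_log_exp_one_add_lt {x y : ℝ} (h : log (exp 1 + x) < y) : x < exp y := by
  have := lt_exp_of_log_lt h
  linarith [exp_pos 1]

theorem product_log_inequality (M s t : ℝ) (hM : 0 ≤ M) (hs : 0 ≤ s) (ht : 0 ≤ t) :
    s * t / (M + Real.log (Real.exp 1 + s * t)) ≤ Real.exp (t - M) + s := by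
  have hst : 0 ≤ s * t := mul_nonneg hs ht
  set D := M + log (exp 1 + s * t)
  have hD : 1 ≤ D := by linarith [one_le_log_exp_one_add hst]
  rcases le_or_gt t D with htD | hDt
  · calc s * t / D ≤ s := mul_div_le_left_of_le hs (by linarith) htD
      _ ≤ exp (t - M) + s := le_add_of_nonneg_left (exp_pos _).le
  · calc s * t / D ≤ s * t := div_le_self hst hD
      _ ≤ exp (t - M) := (lt_exp_of_log_exp_one_add_lt (by linarith)).le
      _ ≤ exp (t - M) + s := le_add_of_nonneg_right hs
end

section
/- Let (Ω, F, P) be a probability space with regular filtration {F_k}, each F_k generated by countably many atoms. Let 0 < p < 1, α_p = 1/p − 1, g ∈ Λ_2(α_p), and let a be a simple (p,∞)-atom supported on A ∈ F_n with P(A)>0 (i.e., E_n(a)=0, supp(a) ⊆ A, ‖a‖_∞ ≤ P(A)^{−1/p}). Then ‖Π_2(a,g)‖_{H^1(Ω)} ≤ ‖g‖_{Λ_2(α_p)}, where Π_2(a,g) = Σ_k a_{k−1} d_k g. -/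
/-!
Since `E_n a = 0` and `a` vanishes off `A ∈ ℱ n`, the predictable coefficients `a_{k-1} = E_{k-1} a`
vanish for `k ≤ n`, and for `k > n` they are supported on `A` with
`|a_{k-1}| ≤ ‖a‖_∞ ≤ P(A)^{-1/p}`. Hence pointwise
`S(Π₂(a,g)) ≤ P(A)^{-1/p} 1_A (Σ_{k>n} |d_k g|²)^{1/2}`.
The martingale differences are orthogonal on the `ℱ n`-set `A`, so
`Σ_{k>n} ∫_A |d_k g|² ≤ ∫_A |g - g_n|² ≤ ‖g‖²_{Λ₂} P(A)^{1+2α_p}`, and Cauchy–Schwarz on `A` gives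
`‖S(Π₂(a,g))‖₁ ≤ P(A)^{-1/p} · ‖g‖_{Λ₂} P(A)^{1/2+α_p} · P(A)^{1/2} = ‖g‖_{Λ₂}`, as `α_p = 1/p - 1`.
-/

open MeasureTheory Filter Set
open scoped ENNReal NNReal

/-- The `k`-th martingale difference `d_k h = E(h | ℱ k) − E(h | ℱ (k−1))` (and `d_0 h = 0`). -/
noncomputable def mdiff {Ω : Type*} {m0 : MeasurableSpace Ω} (μ : Measure Ω)
    (ℱ : Filtration ℕ m0) (h : Ω → ℝ) (k : ℕ) : Ω → ℝ :=
  if k = 0 then 0 else fun ω => (μ[h | ℱ k]) ω - (μ[h | ℱ (k - 1)]) ω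

/-- A filtration is regular. -/
def IsRegularFiltration {Ω : Type*} {m0 : MeasurableSpace Ω} (μ : Measure Ω)
    (ℱ : Filtration ℕ m0) : Prop :=
  ∃ c : ℝ, 0 < c ∧ ∀ k : ℕ, 2 ≤ k → ∀ F : Set Ω, MeasurableSet[ℱ k] F →
    ∃ G : Set Ω, MeasurableSet[ℱ (k - 1)] G ∧ F ⊆ G ∧ μ G ≤ ENNReal.ofReal c * μ F

/-- Each `ℱ k` is generated by countably many atoms (a countable measurable partition). -/
def IsCountablyAtomic {Ω : Type*} {m0 : MeasurableSpace Ω} (ℱ : Filtration ℕ m0) : Prop :=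
  ∀ k : ℕ, ∃ s : ℕ → Set Ω, Pairwise (fun i j => Disjoint (s i) (s j)) ∧
    (⋃ i, s i) = Set.univ ∧ (ℱ k : MeasurableSpace Ω) = MeasurableSpace.generateFrom (Set.range s)

section ConditionalExpectation

variable {Ω : Type*} {m m' m0 : MeasurableSpace Ω} {μ : Measure Ω}

lemma ae_enorm_condExp_le_indicator (hm : m ≤ m0) {a : Ω → ℝ} {A : Set Ω}
    (hA : MeasurableSet[m] A) (hsupp : ∀ ω, ω ∉ A → a ω = 0) :
    ∀ᵐ ω ∂μ, ‖μ[a | m] ω‖ₑ ≤ A.indicator (fun _ => eLpNorm a ∞ μ) ω := by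
  have hbound : eLpNormEssSup (μ[a | m]) μ ≤ eLpNorm a ∞ μ := by
    simpa using eLpNorm_condExp_le_eLpNorm (m := m) (μ := μ) a le_top
  have hvanish : μ[a | m] =ᵐ[μ.restrict Aᶜ] 0 :=
    condExp_ae_eq_restrict_zero hA.compl (ae_restrict_of_forall_mem (hm _ hA).compl hsupp)
  filter_upwards [ae_le_eLpNormEssSup (f := μ[a | m]) (μ := μ),
    (ae_restrict_iff' (hm _ hA).compl).1 hvanish] with ω hle hzero
  by_cases hω : ω ∈ A
  · simpa [hω] using hle.trans hbound
  · simp [hω, hzero hω]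

variable [IsFiniteMeasure μ]

lemma integral_mul_sub_condExp_eq_zero (hm : m ≤ m0) {g X : Ω → ℝ} (hg : MemLp g 2 μ)
    (hX : MemLp X 2 μ) (hXm : StronglyMeasurable[m] X) :
    ∫ ω, X ω * (g ω - μ[g | m] ω) ∂μ = 0 := by
  have hXg : Integrable (X * g) μ := hX.integrable_mul hg
  have hXgm : Integrable (X * μ[g | m]) μ := hX.integrable_mul (hg.condExp one_le_two)
  have hpull : ∫ ω, (X * g) ω ∂μ = ∫ ω, (X * μ[g | m]) ω ∂μ :=
    (integral_condExp hm).symm.trans <| integral_congr_ae <|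
      condExp_mul_of_stronglyMeasurable_left hXm hXg (hg.integrable one_le_two)
  simp_rw [mul_sub]
  exact (integral_sub hXg hXgm).trans (sub_eq_zero.2 hpull)

lemma setIntegral_sq_sub_condExp (hmm' : m ≤ m') (hm' : m' ≤ m0) {A : Set Ω}
    (hA : MeasurableSet[m'] A) {g : Ω → ℝ} (hg : MemLp g 2 μ) :
    ∫ ω in A, (g ω - μ[g | m] ω) ^ 2 ∂μ =
      ∫ ω in A, (g ω - μ[g | m'] ω) ^ 2 ∂μ + ∫ ω in A, (μ[g | m'] ω - μ[g | m] ω) ^ 2 ∂μ := by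
  set u := g - μ[g | m']
  set v := μ[g | m'] - μ[g | m]
  have hu : MemLp u 2 μ := hg.sub (hg.condExp one_le_two)
  have hv : MemLp v 2 μ := (hg.condExp one_le_two).sub (hg.condExp one_le_two)
  have hvm : StronglyMeasurable[m'] v :=
    stronglyMeasurable_condExp.sub (stronglyMeasurable_condExp.mono hmm')
  have horth : ∫ ω in A, v ω * u ω ∂μ = 0 := by
    rw [← integral_indicator (hm' _ hA)]
    simp_rw [Set.indicator_mul_left]
    exact integral_mul_sub_condExp_eq_zero hm' hg (hv.indicator (hm' _ hA)) (hvm.indicator hA)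
  have hexpand : ∀ ω, (g ω - μ[g | m] ω) ^ 2 = (u ω ^ 2 + v ω ^ 2) + 2 * (v ω * u ω) := by
    intro ω; simp only [u, v, Pi.sub_apply]; ring
  have hu2 : IntegrableOn (fun ω => u ω ^ 2) A μ := hu.integrable_sq.integrableOn
  have hv2 : IntegrableOn (fun ω => v ω ^ 2) A μ := hv.integrable_sq.integrableOn
  have huv : IntegrableOn (fun ω => 2 * (v ω * u ω)) A μ :=
    ((hv.integrable_mul hu).const_mul 2).integrableOn
  have hsum : IntegrableOn (fun ω => u ω ^ 2 + v ω ^ 2) A μ := hu2.add hv2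
  simp_rw [hexpand]
  rw [integral_add hsum huv, integral_add hu2 hv2, integral_const_mul, horth,
    mul_zero, add_zero]
  rfl

lemma condExp_ae_eq_zero_of_le (hmm' : m ≤ m') (hm' : m' ≤ m0) {a : Ω → ℝ}
    (ha : μ[a | m'] =ᵐ[μ] 0) : μ[a | m] =ᵐ[μ] 0 := by
  refine (condExp_condExp_of_le hmm' hm').symm.trans ?_
  simpa using condExp_congr_ae (m := m) ha

end ConditionalExpectation

lemma enorm_sq_eq_ofReal_sq (x : ℝ) : ‖x‖ₑ ^ 2 = ENNReal.ofReal (x ^ 2) := by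
  rw [Real.enorm_eq_ofReal_abs, ← ENNReal.ofReal_pow (abs_nonneg x), sq_abs]

/-- For a non-summable sequence the real `tsum` is `0`, so only an inequality holds in general. -/
lemma ofReal_sqrt_tsum_sq_le (f : ℕ → ℝ) :
    ENNReal.ofReal √(∑' k, f k ^ 2) ≤ (∑' k, ‖f k‖ₑ ^ 2) ^ (1 / 2 : ℝ) := by
  by_cases hf : Summable fun k => f k ^ 2
  · rw [Real.sqrt_eq_rpow, ← ENNReal.ofReal_rpow_of_nonneg (tsum_nonneg fun k => sq_nonneg _)
      (by norm_num), ENNReal.ofReal_tsum_of_nonneg (fun k => sq_nonneg _) hf]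
    simp_rw [enorm_sq_eq_ofReal_sq, le_refl]
  · simp [tsum_eq_zero_of_not_summable hf]

section MartingaleDifference

variable {Ω : Type*} {m0 : MeasurableSpace Ω} {μ : Measure Ω} (ℱ : Filtration ℕ m0) {g : Ω → ℝ}

lemma mdiff_succ (k : ℕ) : mdiff μ ℱ g (k + 1) = μ[g | ℱ (k + 1)] - μ[g | ℱ k] := rfl

lemma stronglyMeasurable_mdiff (k : ℕ) : StronglyMeasurable (mdiff μ ℱ g k) := by
  cases k with
  | zero => exact stronglyMeasurable_zero
  | succ k =>
    exact (stronglyMeasurable_condExp.mono (ℱ.le _)).sub (stronglyMeasurable_condExp.mono (ℱ.le _))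

lemma memLp_mdiff (hg : MemLp g 2 μ) (k : ℕ) : MemLp (mdiff μ ℱ g k) 2 μ := by
  cases k with
  | zero => exact MemLp.zero
  | succ k => exact (hg.condExp one_le_two).sub (hg.condExp one_le_two)

variable [IsFiniteMeasure μ]

lemma setIntegral_sq_sub_condExp_eq_sum_add {n : ℕ} {A : Set Ω} (hA : MeasurableSet[ℱ n] A)
    (hg : MemLp g 2 μ) (j : ℕ) :
    ∫ ω in A, (g ω - μ[g | ℱ n] ω) ^ 2 ∂μ =
      ∑ k ∈ Finset.Ioc n (n + j), ∫ ω in A, mdiff μ ℱ g k ω ^ 2 ∂μ +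
        ∫ ω in A, (g ω - μ[g | ℱ (n + j)] ω) ^ 2 ∂μ := by
  induction j with
  | zero => simp
  | succ j ih =>
    rw [ih, ← add_assoc, Finset.sum_Ioc_succ_top (Nat.le_add_right n j), add_assoc]
    congr 1
    rw [setIntegral_sq_sub_condExp (ℱ.mono (n + j).le_succ) (ℱ.le _)
      (ℱ.mono (by omega : n ≤ n + j + 1) _ hA) hg, add_comm, mdiff_succ]
    rfl

lemma lintegral_tsum_tail_enorm_mdiff_sq_le {n : ℕ} {A : Set Ω} (hA : MeasurableSet[ℱ n] A)
    (hg : MemLp g 2 μ) :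
    ∫⁻ ω in A, ∑' k, (if n < k then ‖mdiff μ ℱ g k ω‖ₑ ^ 2 else 0) ∂μ ≤
      ENNReal.ofReal (∫ ω in A, (g ω - μ[g | ℱ n] ω) ^ 2 ∂μ) := by
  have hterm : ∀ k, ∫⁻ ω in A, ‖mdiff μ ℱ g k ω‖ₑ ^ 2 ∂μ =
      ENNReal.ofReal (∫ ω in A, mdiff μ ℱ g k ω ^ 2 ∂μ) := fun k => by
    simp_rw [enorm_sq_eq_ofReal_sq]
    exact (ofReal_integral_eq_lintegral_ofReal (memLp_mdiff ℱ hg k).integrable_sq.integrableOn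
      (ae_of_all _ fun ω => sq_nonneg _)).symm
  have hmeas : ∀ k, AEMeasurable (fun ω => ‖mdiff μ ℱ g k ω‖ₑ ^ 2) (μ.restrict A) :=
    fun k => ((stronglyMeasurable_mdiff ℱ k).measurable.enorm.pow_const 2).aemeasurable
  rw [lintegral_tsum fun k => by split_ifs <;> [exact hmeas k; exact aemeasurable_const]]
  refine ENNReal.tsum_le_of_sum_range_le fun N => ?_
  calc ∑ k ∈ Finset.range N, ∫⁻ ω in A, (if n < k then ‖mdiff μ ℱ g k ω‖ₑ ^ 2 else 0) ∂μ
      = ∑ k ∈ (Finset.range N).filter (n < ·), ∫⁻ ω in A, ‖mdiff μ ℱ g k ω‖ₑ ^ 2 ∂μ := by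
        rw [Finset.sum_filter]
        exact Finset.sum_congr rfl fun k _ => by split_ifs <;> simp
    _ ≤ ∑ k ∈ Finset.Ioc n (n + N), ∫⁻ ω in A, ‖mdiff μ ℱ g k ω‖ₑ ^ 2 ∂μ :=
        Finset.sum_le_sum_of_subset fun k hk => by
          simp only [Finset.mem_filter, Finset.mem_range, Finset.mem_Ioc] at hk ⊢
          omega
    _ = ENNReal.ofReal (∑ k ∈ Finset.Ioc n (n + N), ∫ ω in A, mdiff μ ℱ g k ω ^ 2 ∂μ) := by
        rw [ENNReal.ofReal_sum_of_nonneg fun k _ => integral_nonneg fun ω => sq_nonneg _]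
        exact Finset.sum_congr rfl fun k _ => hterm k
    _ ≤ ENNReal.ofReal (∫ ω in A, (g ω - μ[g | ℱ n] ω) ^ 2 ∂μ) := by
        refine ENNReal.ofReal_le_ofReal ?_
        rw [setIntegral_sq_sub_condExp_eq_sum_add ℱ hA hg N]
        exact le_add_of_nonneg_right (integral_nonneg fun ω => sq_nonneg _)

end MartingaleDifference

section Atom

variable {Ω : Type*} {m0 : MeasurableSpace Ω} {μ : Measure Ω} [IsFiniteMeasure μ]
  (ℱ : Filtration ℕ m0) {a : Ω → ℝ} {n : ℕ} {A : Set Ω}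

lemma ae_enorm_condExp_pred_mul_sq_le (hA : MeasurableSet[ℱ n] A) (hzero : μ[a | ℱ n] =ᵐ[μ] 0)
    (hsupp : ∀ ω, ω ∉ A → a ω = 0) (h : Ω → ℝ) (k : ℕ) :
    ∀ᵐ ω ∂μ, ‖μ[a | ℱ (k - 1)] ω * h ω‖ₑ ^ 2 ≤
      eLpNorm a ∞ μ ^ 2 * A.indicator (fun ω => if n < k then ‖h ω‖ₑ ^ 2 else 0) ω := by
  rcases lt_or_ge n k with hnk | hkn
  · filter_upwards [ae_enorm_condExp_le_indicator (ℱ.le (k - 1))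
      (ℱ.mono (by omega : n ≤ k - 1) _ hA) hsupp] with ω hω
    by_cases hωA : ω ∈ A
    · simp only [hωA, Set.indicator_of_mem, if_pos hnk] at hω ⊢
      rw [enorm_mul, mul_pow]
      gcongr
    · simp_all
  · filter_upwards [condExp_ae_eq_zero_of_le (ℱ.mono (by omega : k - 1 ≤ n)) (ℱ.le n) hzero]
      with ω hω
    simp [hω]

lemma ae_ofReal_sqrt_tsum_condExp_pred_mul_sq_le (hA : MeasurableSet[ℱ n] A)
    (hzero : μ[a | ℱ n] =ᵐ[μ] 0) (hsupp : ∀ ω, ω ∉ A → a ω = 0) {C : ℝ≥0∞}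
    (hC : eLpNorm a ∞ μ ≤ C) (h : ℕ → Ω → ℝ) :
    ∀ᵐ ω ∂μ, ENNReal.ofReal √(∑' k, (μ[a | ℱ (k - 1)] ω * h k ω) ^ 2) ≤
      C * A.indicator (fun ω => (∑' k, if n < k then ‖h k ω‖ₑ ^ 2 else 0) ^ (1 / 2 : ℝ)) ω := by
  filter_upwards [ae_all_iff.2 fun k => ae_enorm_condExp_pred_mul_sq_le ℱ hA hzero hsupp (h k) k]
    with ω hω
  have hCsq : (C ^ 2) ^ (1 / 2 : ℝ) = C := by
    rw [← ENNReal.rpow_natCast, ← ENNReal.rpow_mul]; norm_num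
  calc _ ≤ (∑' k, ‖μ[a | ℱ (k - 1)] ω * h k ω‖ₑ ^ 2) ^ (1 / 2 : ℝ) := ofReal_sqrt_tsum_sq_le _
    _ ≤ (∑' k, C ^ 2 * A.indicator (fun ω => if n < k then ‖h k ω‖ₑ ^ 2 else 0) ω) ^
          (1 / 2 : ℝ) := by
        gcongr with k
        exact (hω k).trans (by gcongr)
    _ = C * A.indicator (fun ω => (∑' k, if n < k then ‖h k ω‖ₑ ^ 2 else 0) ^ (1 / 2 : ℝ)) ω := by
        rw [ENNReal.tsum_mul_left, ENNReal.mul_rpow_of_nonneg _ _ (by norm_num), hCsq]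
        by_cases hωA : ω ∈ A <;> simp [hωA]

end Atom

lemma lintegral_rpow_half_le {α : Type*} [MeasurableSpace α] (ν : Measure α) {G : α → ℝ≥0∞}
    (hG : AEMeasurable G ν) :
    ∫⁻ x, G x ^ (1 / 2 : ℝ) ∂ν ≤ (∫⁻ x, G x ∂ν) ^ (1 / 2 : ℝ) * ν univ ^ (1 / 2 : ℝ) := by
  have h := ENNReal.lintegral_mul_le_Lp_mul_Lq ν Real.HolderConjugate.two_two
    (hG.pow_const (1 / 2 : ℝ)) (aemeasurable_const (b := (1 : ℝ≥0∞)))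
  simp only [Pi.mul_apply, mul_one, ENNReal.one_rpow, lintegral_const, one_mul] at h
  refine h.trans_eq ?_
  simp_rw [← ENNReal.rpow_mul]
  norm_num

lemma rpow_neg_one_div_mul_sqrt_mul_sqrt_eq_ofReal {t : ℝ≥0∞} (ht0 : t ≠ 0) (ht : t ≠ ∞)
    {K : ℝ} (hK : 0 ≤ K) (p : ℝ) :
    t ^ (-(1 / p)) *
        (ENNReal.ofReal (K ^ 2 * t.toReal ^ (1 + 2 * (1 / p - 1))) ^ (1 / 2 : ℝ) *
          t ^ (1 / 2 : ℝ)) = ENNReal.ofReal K := by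
  obtain ⟨s, hs, rfl⟩ : ∃ s : ℝ, 0 < s ∧ t = ENNReal.ofReal s :=
    ⟨t.toReal, ENNReal.toReal_pos ht0 ht, (ENNReal.ofReal_toReal ht).symm⟩
  rw [ENNReal.toReal_ofReal hs.le, ENNReal.ofReal_rpow_of_pos hs, ENNReal.ofReal_rpow_of_pos hs,
    ENNReal.ofReal_rpow_of_nonneg (by positivity) (by norm_num),
    ← ENNReal.ofReal_mul (by positivity), ← ENNReal.ofReal_mul (by positivity)]
  congr 1
  have hexp : s ^ (-(1 / p)) * (s ^ ((1 + 2 * (1 / p - 1)) * (1 / 2)) * s ^ (1 / 2 : ℝ)) = 1 := by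
    rw [← Real.rpow_add hs, ← Real.rpow_add hs,
      show -(1 / p) + ((1 + 2 * (1 / p - 1)) * (1 / 2) + 1 / 2) = (0 : ℝ) by ring, Real.rpow_zero]
  rw [Real.mul_rpow (by positivity) (by positivity), ← Real.rpow_natCast K 2, ← Real.rpow_mul hK,
    ← Real.rpow_mul hs.le, show ((2 : ℕ) : ℝ) * (1 / 2) = 1 by norm_num, Real.rpow_one]
  linear_combination K * hexp

theorem paraproduct_Pi2_pAtom_bound_general {Ω : Type*} {m0 : MeasurableSpace Ω} (μ : Measure Ω)
    [IsProbabilityMeasure μ] (ℱ : Filtration ℕ m0)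
    (p : ℝ)
    (g a : Ω → ℝ) (hg : MemLp g 2 μ)
    (n : ℕ) (A : Set Ω) (hA : MeasurableSet[ℱ n] A) (hApos : 0 < μ A)
    (hzero : μ[a | ℱ n] =ᵐ[μ] 0)
    (hsupp : ∀ ω, ω ∉ A → a ω = 0)
    (hsize : eLpNorm a ∞ μ ≤ μ A ^ (-(1 / p) : ℝ))
    (K : ℝ) (hK : 0 ≤ K)
    (hΛ2 : ∀ (m : ℕ) (B : Set Ω), MeasurableSet[ℱ m] B →
      ∫ ω in B, (g ω - (μ[g | ℱ m]) ω) ^ 2 ∂μ ≤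
        K ^ 2 * (μ B).toReal ^ (1 + 2 * (1 / p - 1))) :
    eLpNorm (fun ω =>
        Real.sqrt (∑' k : ℕ, ((μ[a | ℱ (k - 1)]) ω * mdiff μ ℱ g k ω) ^ 2)) 1 μ ≤
      ENNReal.ofReal K := by
  set C := μ A ^ (-(1 / p) : ℝ)
  set G : Ω → ℝ≥0∞ := fun ω => ∑' k, if n < k then ‖mdiff μ ℱ g k ω‖ₑ ^ 2 else 0
  have hC : C ≠ ∞ := ENNReal.rpow_ne_top_of_ne_zero hApos.ne' (measure_ne_top μ A)
  have hG : Measurable G := Measurable.tsum fun k => by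
    split_ifs
    · exact (stronglyMeasurable_mdiff ℱ k).measurable.enorm.pow_const 2
    · exact measurable_const
  rw [eLpNorm_one_eq_lintegral_enorm]
  calc ∫⁻ ω, ‖√(∑' k, (μ[a | ℱ (k - 1)] ω * mdiff μ ℱ g k ω) ^ 2)‖ₑ ∂μ
      = ∫⁻ ω, ENNReal.ofReal √(∑' k, (μ[a | ℱ (k - 1)] ω * mdiff μ ℱ g k ω) ^ 2) ∂μ := by
        simp_rw [Real.enorm_of_nonneg (Real.sqrt_nonneg _)]
    _ ≤ ∫⁻ ω, C * A.indicator (fun ω => G ω ^ (1 / 2 : ℝ)) ω ∂μ :=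
        lintegral_mono_ae <|
          ae_ofReal_sqrt_tsum_condExp_pred_mul_sq_le ℱ hA hzero hsupp hsize (mdiff μ ℱ g)
    _ = C * ∫⁻ ω in A, G ω ^ (1 / 2 : ℝ) ∂μ := by
        rw [lintegral_const_mul' _ _ hC, lintegral_indicator (ℱ.le n _ hA)]
    _ ≤ C * ((∫⁻ ω in A, G ω ∂μ) ^ (1 / 2 : ℝ) * μ A ^ (1 / 2 : ℝ)) := by
        gcongr
        simpa using lintegral_rpow_half_le (μ.restrict A) hG.aemeasurable
    _ ≤ C * (ENNReal.ofReal (K ^ 2 * (μ A).toReal ^ (1 + 2 * (1 / p - 1))) ^ (1 / 2 : ℝ) *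
          μ A ^ (1 / 2 : ℝ)) := by
        gcongr
        exact (lintegral_tsum_tail_enorm_mdiff_sq_le ℱ hA hg).trans
          (ENNReal.ofReal_le_ofReal (hΛ2 n A hA))
    _ = ENNReal.ofReal K :=
        rpow_neg_one_div_mul_sqrt_mul_sqrt_eq_ofReal hApos.ne' (measure_ne_top μ A) hK p

/-- For `0 < p < 1`, `α_p = 1/p − 1`, `g ∈ Λ₂(α_p)` with norm bound `K`, and `a` a simple
`(p,∞)`-atom supported on `A ∈ ℱ n` with `P(A) > 0`, the paraproduct
`Π₂(a,g) = Σ_k a_{k−1} d_k g` satisfies `‖Π₂(a,g)‖_{H¹} = ‖S(Π₂(a,g))‖₁ ≤ K`, where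
`S(Π₂(a,g)) = (Σ_k |a_{k−1} d_k g|²)^{1/2}`. -/
theorem paraproduct_Pi2_pAtom_bound {Ω : Type*} {m0 : MeasurableSpace Ω} (μ : Measure Ω)
    [IsProbabilityMeasure μ] (ℱ : Filtration ℕ m0)
    (hreg : IsRegularFiltration μ ℱ) (hatomic : IsCountablyAtomic ℱ)
    (p : ℝ) (hp0 : 0 < p) (hp1 : p < 1)
    (g a : Ω → ℝ) (hg : MemLp g 2 μ) (ha : MemLp a ∞ μ)
    (n : ℕ) (A : Set Ω) (hA : MeasurableSet[ℱ n] A) (hApos : 0 < μ A)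
    (hzero : μ[a | ℱ n] =ᵐ[μ] 0)
    (hsupp : ∀ ω, ω ∉ A → a ω = 0)
    (hsize : eLpNorm a ∞ μ ≤ μ A ^ (-(1 / p) : ℝ))
    (K : ℝ) (hK : 0 ≤ K)
    (hΛ2 : ∀ (m : ℕ) (B : Set Ω), MeasurableSet[ℱ m] B →
      ∫ ω in B, (g ω - (μ[g | ℱ m]) ω) ^ 2 ∂μ ≤
        K ^ 2 * (μ B).toReal ^ (1 + 2 * (1 / p - 1))) :
    eLpNorm (fun ω =>
        Real.sqrt (∑' k : ℕ, ((μ[a | ℱ (k - 1)]) ω * mdiff μ ℱ g k ω) ^ 2)) 1 μ ≤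
      ENNReal.ofReal K :=
  paraproduct_Pi2_pAtom_bound_general μ ℱ p g a hg n A hA hApos hzero hsupp hsize K hK hΛ2
end

section
/- Let (Ω, d, μ) be a space of homogeneous type with doubling constant 2^{C_μ} (i.e., μ(B(x,2r)) ≤ 2^{C_μ} μ(B(x,r)) for all x, r > 0). Fix a point O ∈ Ω and D ≥ 1, 0 < p < 1. If a ball B = B(x_0, r) satisfies ∫_B [1 + (1 + μ(B(O, d(x,O))))^{1−p}]^{−1} dμ(x) = 1, then ∫_{DB} [1 + (1 + μ(B(O, d(x,O))))^{1−p}]^{−1} dμ(x) ≤ C where C depends only on D, p, the quasi-metric constant A_0 and C_μ, and DB = B(x_0, Dr). -/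
/-!
Write `m(x) = μ(B(O, d(x, O)))` and `V = μ(B)`. Since the weight is at most `1`, the integral
over `DB` is at most `μ(DB) ≲ V`, while `∫_B = 1` bounds `V` by the reciprocal of the infimum
of the weight on `B`. If `x₀` is close to `O`, every ball `B(O, d(x, O))` with `x ∈ B` lies in a
fixed dilate of `B`, so `V ≲ 1 + (1 + V)^{1-p}`, and since `1 - p < 1` this bounds `V`.
If `x₀` is far from `O`, then `d(x, O)` is comparable to `d(x₀, O)` on `DB`, so by doubling the
weight is comparable to a constant there and the two estimates cancel.
-/

open MeasureTheory Set
open scoped ENNReal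

/-- `psiWeight p (μ(B(O, d(x, O))))` is the Musielak–Orlicz function `Ψ_p(x, 1)`. -/
noncomputable def psiWeight (p t : ℝ) : ℝ := (1 + (1 + t) ^ (1 - p))⁻¹

section psiWeight

variable {p s t : ℝ}

lemma psiWeight_pos (ht : 0 ≤ t) : 0 < psiWeight p t := by
  unfold psiWeight; positivity

lemma psiWeight_le_one (ht : 0 ≤ t) : psiWeight p t ≤ 1 :=
  inv_le_one_of_one_le₀ (le_add_of_nonneg_right (by positivity))

lemma psiWeight_anti (hp : p ≤ 1) (hs : 0 ≤ s) (hst : s ≤ t) :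
    psiWeight p t ≤ psiWeight p s := by
  unfold psiWeight; gcongr

lemma psiWeight_le_mul_psiWeight {L : ℝ} (hp0 : 0 ≤ p) (hp1 : p ≤ 1) (hL : 1 ≤ L)
    (hs : 0 ≤ s) (ht : 0 ≤ t) (hts : t ≤ L * s) : psiWeight p s ≤ L * psiWeight p t := by
  have hq0 : 0 ≤ 1 - p := by linarith
  have hq1 : 1 - p ≤ 1 := by linarith
  have h1 : (1 + t) ^ (1 - p) ≤ L * (1 + s) ^ (1 - p) :=
    calc (1 + t) ^ (1 - p) ≤ (L * (1 + s)) ^ (1 - p) := by gcongr; nlinarith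
      _ = L ^ (1 - p) * (1 + s) ^ (1 - p) := Real.mul_rpow (by linarith) (by linarith)
      _ ≤ L * (1 + s) ^ (1 - p) := by
        gcongr
        simpa using Real.rpow_le_rpow_of_exponent_le hL hq1
  unfold psiWeight
  rw [← div_eq_mul_inv, le_div_iff₀ (by positivity), ← div_eq_inv_mul,
    div_le_iff₀ (by positivity)]
  linarith

end psiWeight

lemma le_rpow_inv_of_le_mul_rpow {a b p : ℝ} (ha : 1 ≤ a) (hp : 0 < p)
    (h : a ≤ b * a ^ (1 - p)) : a ≤ b ^ p⁻¹ := by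
  have hpos : 0 < a ^ (1 - p) := Real.rpow_pos_of_pos (by linarith) _
  have hsplit : a = a ^ p * a ^ (1 - p) := by
    rw [← Real.rpow_add (by linarith), add_sub_cancel, Real.rpow_one]
  have hb : a ^ p ≤ b := le_of_mul_le_mul_right (hsplit ▸ h) hpos
  exact (Real.le_rpow_inv_iff_of_pos (by linarith) ((Real.rpow_nonneg (by linarith) _).trans hb)
    hp).2 hb

section SetIntegral

variable {Ω : Type*} [MeasurableSpace Ω] {μ : Measure Ω} {f : Ω → ℝ} {s : Set Ω} {a : ℝ}

lemma measureReal_le_inv_of_setIntegral_eq_one (hs : MeasurableSet s) (hμs : μ s ≠ ∞)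
    (ha : 0 < a) (hf : ∀ x ∈ s, a ≤ f x) (h1 : ∫ x in s, f x ∂μ = 1) : μ.real s ≤ a⁻¹ := by
  have h := setIntegral_ge_of_const_le_real hs hμs hf
    (Integrable.of_integral_ne_zero (h1 ▸ one_ne_zero))
  rw [h1] at h
  rw [← one_div, le_div_iff₀ ha]
  linarith

lemma setIntegral_le_mul_measureReal (hμs : μ s < ∞) (hf0 : ∀ x ∈ s, 0 ≤ f x)
    (hf : ∀ x ∈ s, f x ≤ a) : ∫ x in s, f x ∂μ ≤ a * μ.real s :=
  (Real.le_norm_self _).trans <| norm_setIntegral_le_of_norm_le_const hμs fun x hx => by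
    rw [Real.norm_of_nonneg (hf0 x hx)]; exact hf x hx

end SetIntegral

structure IsDoublingQuasiMetric {Ω : Type*} [MeasurableSpace Ω] (μ : Measure Ω)
    (d : Ω → Ω → ℝ) (A₀ c : ℝ) : Prop where
  symm : ∀ x y, d x y = d y x
  triangle : ∀ x y z, d x y ≤ A₀ * (d x z + d z y)
  measurableSet_ball : ∀ x r, MeasurableSet {y | d y x < r}
  measure_ball_lt_top : ∀ x r, 0 < r → μ {y | d y x < r} < ⊤
  doubling : ∀ x r, 0 < r → μ {y | d y x < 2 * r} ≤ ENNReal.ofReal c * μ {y | d y x < r}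

namespace IsDoublingQuasiMetric

variable {Ω : Type*} [MeasurableSpace Ω] {μ : Measure Ω} {d : Ω → Ω → ℝ} {A₀ c : ℝ}

lemma measure_ball_two_pow_mul_le (h : IsDoublingQuasiMetric μ d A₀ c) (x : Ω) {s : ℝ}
    (hs : 0 < s) : ∀ n : ℕ,
    μ {y | d y x < 2 ^ n * s} ≤ ENNReal.ofReal c ^ n * μ {y | d y x < s}
  | 0 => by simp
  | n + 1 => calc
      μ {y | d y x < 2 ^ (n + 1) * s} = μ {y | d y x < 2 * (2 ^ n * s)} := by
        rw [pow_succ', mul_assoc]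
      _ ≤ ENNReal.ofReal c * μ {y | d y x < 2 ^ n * s} := h.doubling x _ (by positivity)
      _ ≤ ENNReal.ofReal c * (ENNReal.ofReal c ^ n * μ {y | d y x < s}) := by
        gcongr; exact h.measure_ball_two_pow_mul_le x hs n
      _ = ENNReal.ofReal c ^ (n + 1) * μ {y | d y x < s} := by rw [pow_succ', mul_assoc]

lemma measureReal_ball_le_of_le_two_pow_mul (h : IsDoublingQuasiMetric μ d A₀ c) (hc : 0 ≤ c)
    (x : Ω) {s t : ℝ} {n : ℕ} (hs : 0 < s) (ht : t ≤ 2 ^ n * s) :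
    μ.real {y | d y x < t} ≤ c ^ n * μ.real {y | d y x < s} := by
  have hsub : {y | d y x < t} ⊆ {y | d y x < 2 ^ n * s} := fun y hy => lt_of_lt_of_le hy ht
  have hle := (measure_mono hsub).trans (h.measure_ball_two_pow_mul_le x hs n)
  rw [← ENNReal.ofReal_pow hc] at hle
  have hfin := ENNReal.mul_ne_top (ENNReal.ofReal_ne_top (r := c ^ n))
    (h.measure_ball_lt_top x s hs).ne
  simpa [Measure.real, ENNReal.toReal_mul, hc] using ENNReal.toReal_mono hfin hle

lemma setOf_lt_subset_of_dist_lt (h : IsDoublingQuasiMetric μ d A₀ c) (hA₀ : 0 < A₀)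
    {r R : ℝ} {O x x₀ : Ω} (hx : d x x₀ < r) (hO : d x₀ O ≤ R) :
    {y | d y O < d x O} ⊆ {y | d y x₀ < A₀ * (A₀ * (r + R) + R)} := by
  intro y (hy : d y O < d x O)
  have hxO : d x O ≤ A₀ * (r + R) := (h.triangle x O x₀).trans (by gcongr)
  calc d y x₀ ≤ A₀ * (d y O + d O x₀) := h.triangle y x₀ O
    _ < A₀ * (A₀ * (r + R) + R) := by
      rw [h.symm O x₀]; exact mul_lt_mul_of_pos_left (by linarith) hA₀

lemma dist_le_two_mul_dist (h : IsDoublingQuasiMetric μ d A₀ c) (hA₀ : 0 ≤ A₀) {r : ℝ}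
    {O x x₀ : Ω} (hx : d x x₀ < r) (hr : r ≤ d x₀ O) : d x O ≤ 2 * A₀ * d x₀ O :=
  (h.triangle x O x₀).trans (by nlinarith)

lemma measureReal_ball_two_mul_le (h : IsDoublingQuasiMetric μ d A₀ c) (hA₀ : 0 < A₀)
    (hc : 0 ≤ c) {N : ℕ} (hN : 4 * A₀ ^ 2 ≤ 2 ^ N) (O : Ω) {R : ℝ} (hR : 0 < R) :
    μ.real {y | d y O < 2 * A₀ * R} ≤ c ^ N * μ.real {y | d y O < R / (2 * A₀)} :=
  h.measureReal_ball_le_of_le_two_pow_mul hc O (by positivity) <|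
    calc 2 * A₀ * R = 4 * A₀ ^ 2 * (R / (2 * A₀)) := by field_simp; ring
      _ ≤ 2 ^ N * (R / (2 * A₀)) := by gcongr

lemma div_two_mul_lt_dist (h : IsDoublingQuasiMetric μ d A₀ c) (hA₀ : 0 < A₀) {s : ℝ}
    {O x x₀ : Ω} (hx : d x x₀ < s) (hfar : 2 * A₀ * s < d x₀ O) :
    d x₀ O / (2 * A₀) < d x O := by
  have h₁ := h.triangle x₀ O x
  rw [h.symm x₀ x] at h₁
  rw [div_lt_iff₀ (by positivity)]
  nlinarith

variable {D p r : ℝ} {N : ℕ} {O x₀ : Ω}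

lemma measureReal_dilate_le (h : IsDoublingQuasiMetric μ d A₀ c) (hA₀ : 1 ≤ A₀) (hc : 0 ≤ c)
    (hD : 0 ≤ D) (hN : 5 * A₀ ^ 3 * D ≤ 2 ^ N) (hr : 0 < r) :
    μ.real {y | d y x₀ < D * r} ≤ c ^ N * μ.real {y | d y x₀ < r} :=
  h.measureReal_ball_le_of_le_two_pow_mul hc x₀ hr <| by
    gcongr
    nlinarith [one_le_pow₀ (n := 3) hA₀]

lemma setIntegral_psiWeight_le_of_near (h : IsDoublingQuasiMetric μ d A₀ c) (hA₀ : 1 ≤ A₀)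
    (hc : 0 ≤ c) (hD : 1 ≤ D) (hp0 : 0 < p) (hp1 : p ≤ 1) (hN : 5 * A₀ ^ 3 * D ≤ 2 ^ N)
    (hr : 0 < r) (hnear : d x₀ O ≤ 2 * A₀ * D * r)
    (hB : ∫ x in {y | d y x₀ < r}, psiWeight p (μ.real {y | d y O < d x O}) ∂μ = 1) :
    ∫ x in {y | d y x₀ < D * r}, psiWeight p (μ.real {y | d y O < d x O}) ∂μ ≤
      (1 + 2 * c ^ N) ^ p⁻¹ := by
  set L := c ^ N
  set V := μ.real {y | d y x₀ < r}
  have hL : 0 ≤ L := by positivity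
  have hV : 0 ≤ V := measureReal_nonneg
  have hR : A₀ * (A₀ * (r + 2 * A₀ * D * r) + 2 * A₀ * D * r) ≤ 2 ^ N * r := by
    have hA₀2 : A₀ ^ 2 ≤ A₀ ^ 3 := pow_le_pow_right₀ hA₀ (by norm_num)
    have hDr : r ≤ D * r := le_mul_of_one_le_left hr.le hD
    nlinarith [mul_le_mul_of_nonneg_right hA₀2 (by positivity : (0 : ℝ) ≤ D * r)]
  have hmB : ∀ x ∈ {y | d y x₀ < r}, μ.real {y | d y O < d x O} ≤ L * V := fun x hx =>
    (measureReal_mono (h.setOf_lt_subset_of_dist_lt (by linarith) hx hnear)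
      (h.measure_ball_lt_top x₀ _ (by positivity)).ne).trans
      (h.measureReal_ball_le_of_le_two_pow_mul hc x₀ hr hR)
  have hVB : V ≤ 1 + (1 + L * V) ^ (1 - p) := by
    simpa [psiWeight] using measureReal_le_inv_of_setIntegral_eq_one (h.measurableSet_ball x₀ r)
      (h.measure_ball_lt_top x₀ r hr).ne (psiWeight_pos (by positivity))
      (fun x hx => psiWeight_anti hp1 measureReal_nonneg (hmB x hx)) hB
  have habsorb : 1 + L * V ≤ (1 + 2 * L) ^ p⁻¹ := by
    refine le_rpow_inv_of_le_mul_rpow (by nlinarith) hp0 ?_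
    have h1 : 1 ≤ (1 + L * V) ^ (1 - p) := Real.one_le_rpow (by nlinarith) (by linarith)
    nlinarith
  calc ∫ x in {y | d y x₀ < D * r}, psiWeight p (μ.real {y | d y O < d x O}) ∂μ
      ≤ 1 * μ.real {y | d y x₀ < D * r} :=
        setIntegral_le_mul_measureReal (h.measure_ball_lt_top x₀ _ (by positivity))
          (fun x _ => (psiWeight_pos measureReal_nonneg).le)
          (fun x _ => psiWeight_le_one measureReal_nonneg)
    _ ≤ L * V := by
        rw [one_mul]; exact h.measureReal_dilate_le hA₀ hc (by linarith) hN hr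
    _ ≤ (1 + 2 * L) ^ p⁻¹ := by linarith

lemma setIntegral_psiWeight_le_of_far (h : IsDoublingQuasiMetric μ d A₀ c) (hA₀ : 1 ≤ A₀)
    (hc : 1 ≤ c) (hD : 1 ≤ D) (hp0 : 0 ≤ p) (hp1 : p ≤ 1) (hN : 5 * A₀ ^ 3 * D ≤ 2 ^ N)
    (hr : 0 < r) (hfar : 2 * A₀ * D * r < d x₀ O)
    (hB : ∫ x in {y | d y x₀ < r}, psiWeight p (μ.real {y | d y O < d x O}) ∂μ = 1) :
    ∫ x in {y | d y x₀ < D * r}, psiWeight p (μ.real {y | d y O < d x O}) ∂μ ≤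
      (c ^ N) ^ 2 := by
  set L := c ^ N
  set V := μ.real {y | d y x₀ < r}
  set ρ := d x₀ O / (2 * A₀)
  set m₁ := μ.real {y | d y O < ρ}
  set m₂ := μ.real {y | d y O < 2 * A₀ * d x₀ O}
  have hA₀0 : 0 < A₀ := by linarith
  have hL : 1 ≤ L := one_le_pow₀ hc
  have hd : 0 < d x₀ O := (by positivity : 0 < 2 * A₀ * D * r).trans hfar
  have hρ : 0 < ρ := by positivity
  have hr_le : r ≤ d x₀ O := by
    have : 1 ≤ 2 * A₀ * D := by nlinarith [one_le_mul_of_one_le_of_one_le hA₀ hD]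
    nlinarith
  have hm₂ : m₂ ≤ L * m₁ := h.measureReal_ball_two_mul_le hA₀0 (by linarith)
    (by nlinarith [pow_le_pow_right₀ hA₀ (by norm_num : 2 ≤ 3), pow_pos hA₀0 3]) O hd
  have hlower : ∀ x ∈ {y | d y x₀ < r},
      psiWeight p m₂ ≤ psiWeight p (μ.real {y | d y O < d x O}) := fun x (hx : d x x₀ < r) =>
    psiWeight_anti hp1 measureReal_nonneg <| measureReal_mono
      (fun y (hy : d y O < d x O) => hy.trans_le
        (h.dist_le_two_mul_dist hA₀0.le hx hr_le))
      (h.measure_ball_lt_top O _ (by positivity)).ne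
  have hupper : ∀ x ∈ {y | d y x₀ < D * r},
      psiWeight p (μ.real {y | d y O < d x O}) ≤ psiWeight p m₁ := fun x hx =>
    have hρx := h.div_two_mul_lt_dist hA₀0 hx (by linarith)
    psiWeight_anti hp1 measureReal_nonneg <| measureReal_mono
      (fun y (hy : d y O < ρ) => hy.trans hρx)
      (h.measure_ball_lt_top O _ (hρ.trans hρx)).ne
  have hVB : V ≤ (psiWeight p m₂)⁻¹ :=
    measureReal_le_inv_of_setIntegral_eq_one (h.measurableSet_ball x₀ r)
      (h.measure_ball_lt_top x₀ r hr).ne (psiWeight_pos measureReal_nonneg) hlower hB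
  have hw₂ : 0 < psiWeight p m₂ := psiWeight_pos measureReal_nonneg
  have hw : psiWeight p m₁ ≤ L * psiWeight p m₂ :=
    psiWeight_le_mul_psiWeight hp0 hp1 hL measureReal_nonneg measureReal_nonneg hm₂
  calc ∫ x in {y | d y x₀ < D * r}, psiWeight p (μ.real {y | d y O < d x O}) ∂μ
      ≤ psiWeight p m₁ * μ.real {y | d y x₀ < D * r} :=
        setIntegral_le_mul_measureReal (h.measure_ball_lt_top x₀ _ (by positivity))
          (fun x _ => (psiWeight_pos measureReal_nonneg).le) hupper
    _ ≤ L * psiWeight p m₂ * (L * (psiWeight p m₂)⁻¹) :=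
        mul_le_mul hw ((h.measureReal_dilate_le hA₀ (by linarith) (by linarith) hN hr).trans
          (by gcongr)) measureReal_nonneg (mul_nonneg (by linarith) hw₂.le)
    _ = L ^ 2 := by field_simp

end IsDoublingQuasiMetric

/-- On a space of homogeneous type with quasi-metric constant `A₀` and doubling constant
`2^{C_μ}`, fix `O ∈ Ω`, `D ≥ 1` and `0 < p < 1`. If a ball `B = B(x₀,r)` satisfies
`∫_B [1 + (1 + μ(B(O,d(x,O))))^{1−p}]⁻¹ dμ(x) = 1`, then the corresponding integral over
the dilated ball `DB = B(x₀,Dr)` is bounded by a constant depending only on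
`D, p, A₀, C_μ`. -/
theorem dilated_ball_Psi_p_integral_bound (A0 Cmu D p : ℝ)
    (hA0 : 1 ≤ A0) (hCmu : 0 ≤ Cmu) (hD : 1 ≤ D) (hp0 : 0 < p) (hp1 : p < 1) :
    ∃ C : ℝ, 0 < C ∧
      ∀ (Ω : Type) [m0 : MeasurableSpace Ω] (μ : Measure Ω) (d : Ω → Ω → ℝ),
        (∀ x y, 0 ≤ d x y) → (∀ x, d x x = 0) → (∀ x y, d x y = d y x) →
        (∀ x y z, d x y ≤ A0 * (d x z + d z y)) →
        (∀ x r, MeasurableSet {y | d y x < r}) →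
        (∀ x r, 0 < r → 0 < μ {y | d y x < r}) →
        (∀ x r, 0 < r → μ {y | d y x < r} < ⊤) →
        (∀ x r, 0 < r →
          μ {y | d y x < 2 * r} ≤ ENNReal.ofReal (2 ^ Cmu) * μ {y | d y x < r}) →
        ∀ (O x₀ : Ω) (r : ℝ), 0 < r →
        Measurable (fun x => (μ {y | d y O < d x O}).toReal) →
        (∫ x in {y | d y x₀ < r},
            (1 + (1 + (μ {y | d y O < d x O}).toReal) ^ (1 - p))⁻¹ ∂μ) = 1 →
        ∫ x in {y | d y x₀ < D * r},
            (1 + (1 + (μ {y | d y O < d x O}).toReal) ^ (1 - p))⁻¹ ∂μ ≤ C := by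
  obtain ⟨N, hN⟩ := pow_unbounded_of_one_lt (5 * A0 ^ 3 * D) one_lt_two
  have hc : (1 : ℝ) ≤ 2 ^ Cmu := Real.one_le_rpow one_le_two hCmu
  refine ⟨(1 + 2 * (2 ^ Cmu) ^ N) ^ p⁻¹ + ((2 ^ Cmu) ^ N) ^ 2, by positivity, ?_⟩
  intro Ω _ μ d _ _ hsymm htri hball _ hfin hdbl O x₀ r hr _ hB
  have hΩ : IsDoublingQuasiMetric μ d A0 (2 ^ Cmu) := ⟨hsymm, htri, hball, hfin, hdbl⟩
  rcases le_or_gt (d x₀ O) (2 * A0 * D * r) with hnear | hfar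
  · exact (hΩ.setIntegral_psiWeight_le_of_near hA0 (by linarith) hD hp0 hp1.le hN.le hr hnear
      hB).trans (le_add_of_nonneg_right (by positivity))
  · exact (hΩ.setIntegral_psiWeight_le_of_far hA0 hc hD hp0.le hp1.le hN.le hr hfar
      hB).trans (le_add_of_nonneg_left (by positivity))
end
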